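/- The function h : ℝ → ℝ defined by h(t) = (log((2 + t² + t·√(t² + 4))/2))² is not convex on ℝ. -/
import Mathlib


open Real

lemma exp_nine_le : Real.exp 9 ≤ 10001 := by
  have h1 : Real.exp 1 ≤ 2.7182818286 := Real.exp_one_lt_d9.le
  have h9 : Real.exp 9 = (Real.exp 1) ^ 9 := by
    rw [Real.exp_one_pow]; norm_num
  rw [h9]
  calc (Real.exp 1) ^ 9 ≤ (2.7182818286 : ℝ) ^ 9 :=
        pow_le_pow_left₀ (Real.exp_pos 1).le h1 9
    _ ≤ 10001 := by norm_num

lemma le_exp_eleven : (40101 : ℝ) ≤ Real.exp 11 := by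
  have h1 : (2.7182818283 : ℝ) ≤ Real.exp 1 := Real.exp_one_gt_d9.le
  have h11 : Real.exp 11 = (Real.exp 1) ^ 11 := by
    rw [Real.exp_one_pow]; norm_num
  rw [h11]
  calc (40101 : ℝ) ≤ (2.7182818283 : ℝ) ^ 11 := by norm_num
    _ ≤ (Real.exp 1) ^ 11 := pow_le_pow_left₀ (by norm_num) h1 11

/-- The function `h(t) = (log((2 + t² + t·√(t² + 4))/2))²`, arising from the quadratic
Hencky energy along a simple shear path, is not convex on `ℝ`. -/
theorem hencky_shear_not_convex :
    ¬ ConvexOn ℝ Set.univ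
      (fun t : ℝ => Real.log ((2 + t ^ 2 + t * Real.sqrt (t ^ 2 + 4)) / 2) ^ 2) := by
  intro hc
  have key := hc.2 (Set.mem_univ (0:ℝ)) (Set.mem_univ (200:ℝ))
    (by norm_num : (0:ℝ) ≤ 1/2) (by norm_num : (0:ℝ) ≤ 1/2) (by norm_num)
  simp only [smul_eq_mul] at key
  norm_num at key
  -- key : log ((10002 + 100 * √10004) / 2) ^ 2 ≤ 1 / 2 * log ((40002 + 200 * √40004) / 2) ^ 2
  have s1 : (100 : ℝ) ≤ Real.sqrt 10004 := by
    have : (100:ℝ) = Real.sqrt (100^2) := (Real.sqrt_sq (by norm_num)).symm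
    rw [this]
    exact Real.sqrt_le_sqrt (by norm_num)
  have s2 : Real.sqrt 40004 ≤ 201 := by
    have : (201:ℝ) = Real.sqrt (201^2) := (Real.sqrt_sq (by norm_num)).symm
    rw [this]
    exact Real.sqrt_le_sqrt (by norm_num)
  set A := Real.log (((10002:ℝ) + 100 * Real.sqrt 10004) / 2) with hA
  set B := Real.log (((40002:ℝ) + 200 * Real.sqrt 40004) / 2) with hB
  have pos1 : (0:ℝ) < ((10002:ℝ) + 100 * Real.sqrt 10004) / 2 := by positivity
  have pos2 : (0:ℝ) < ((40002:ℝ) + 200 * Real.sqrt 40004) / 2 := by positivity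
  have hA9 : (9:ℝ) ≤ A := by
    rw [hA, Real.le_log_iff_exp_le pos1]
    have h1 : (10001 : ℝ) ≤ ((10002:ℝ) + 100 * Real.sqrt 10004) / 2 := by linarith
    linarith [exp_nine_le]
  have hB11 : B ≤ 11 := by
    rw [hB, Real.log_le_iff_le_exp pos2]
    have h2 : ((40002:ℝ) + 200 * Real.sqrt 40004) / 2 ≤ 40101 := by linarith
    linarith [le_exp_eleven]
  have hB0 : (0:ℝ) ≤ B := by
    rw [hB]
    apply Real.log_nonneg
    have : (0:ℝ) ≤ Real.sqrt 40004 := Real.sqrt_nonneg _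
    linarith
  nlinarith [key, hA9, hB11, hB0]
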